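/- Let P be a type-C poset on {-n,...,-1,1,...,n}. Then the set of 2n×2n matrices spanned by {E_{-i,-i} - E_{i,i} : i ∈ [n]} ∪ {E_{-i,-j} - E_{j,i} : -i ⪯ -j and j ⪯ i} ∪ {E_{-i,j} + E_{-j,i} : -i ⪯ j and -j ⪯ i, i ≠ j} ∪ {E_{-i,i} : -i ⪯ i} is a Lie subalgebra of gl(2n) (closed under the matrix commutator). -/

import Mathlib

/-- The underlying set `{-n,...,-1,1,...,n}` of a type-C poset, as a finset of integers. -/
noncomputable def Idx (n : ℕ) : Finset ℤ := (Finset.Icc (-(n : ℤ)) (n : ℤ)).erase 0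

/-- The index type `{-n,...,-1,1,...,n}` for rows and columns of `2n × 2n` matrices. -/
abbrev Iv (n : ℕ) := {i : ℤ // i ∈ Idx n}

/-- The matrix unit `E_{a,b}` with a `1` in entry `(a,b)` and `0` elsewhere, for rows and
columns indexed by `{-n,...,-1,1,...,n}`. -/
def EE (k : Type*) [Field k] (n : ℕ) (a b : ℤ) : Matrix (Iv n) (Iv n) k :=
  fun p q => if p.1 = a ∧ q.1 = b then 1 else 0

/-- A type-C poset: a poset on `{-n,...,-1,1,...,n}` such that `i ⪯ j` implies `i ≤ j`,
and for `i ≠ -j`, `i ⪯ j` iff `-j ⪯ -i`. -/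
structure TypeCPoset (n : ℕ) where
  le : ℤ → ℤ → Prop
  mem_of_le : ∀ i j, le i j → i ∈ Idx n ∧ j ∈ Idx n
  refl : ∀ i ∈ Idx n, le i i
  antisymm : ∀ i j, le i j → le j i → i = j
  trans : ∀ i j l, le i j → le j l → le i l
  le_int : ∀ i j, le i j → i ≤ j
  symm : ∀ i j, i ≠ -j → (le i j ↔ le (-j) (-i))

/-- The generating set of the type-C Lie poset algebra `g_C(P)`:
`{E_{-i,-i} - E_{i,i} : i ∈ [n]} ∪ {E_{-i,-j} - E_{j,i} : -i ⪯ -j, j ⪯ i} ∪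
{E_{-i,j} + E_{-j,i} : -i ⪯ j, -j ⪯ i, i ≠ j} ∪ {E_{-i,i} : -i ⪯ i}`. -/
def gCgen (k : Type*) [Field k] (n : ℕ) (le : ℤ → ℤ → Prop) :
    Set (Matrix (Iv n) (Iv n) k) :=
  {M | (∃ i : ℤ, 1 ≤ i ∧ i ≤ n ∧ M = EE k n (-i) (-i) - EE k n i i) ∨
       (∃ i j : ℤ, 1 ≤ i ∧ i ≤ n ∧ 1 ≤ j ∧ j ≤ n ∧ le (-i) (-j) ∧ le j i ∧
          M = EE k n (-i) (-j) - EE k n j i) ∨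
       (∃ i j : ℤ, 1 ≤ i ∧ i ≤ n ∧ 1 ≤ j ∧ j ≤ n ∧ le (-i) j ∧ le (-j) i ∧ i ≠ j ∧
          M = EE k n (-i) j + EE k n (-j) i) ∨
       (∃ i : ℤ, 1 ≤ i ∧ i ≤ n ∧ le (-i) i ∧ M = EE k n (-i) i)}

/-! Split the generators into the block-diagonal ones `E_{-i,-j} - E_{j,i}` (which include
`E_{-i,-i} - E_{i,i}`) and those supported in the upper-right block, `E_{-i,j} + E_{-j,i}` and
`E_{-i,i}`. Any two matrices of the upper-right block multiply to zero, so they commute. The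
bracket of a block-diagonal generator with any generator is a sum of at most two matrices of the
same shapes, and the relations they require follow from those of the two factors by transitivity
of `⪯`. Bilinearity of the bracket then extends closure from the generators to their span. -/

open Submodule

attribute [local instance] LieRing.ofAssociativeRing

theorem ite_zero_mem {M S : Type*} [Zero M] [SetLike S M] [ZeroMemClass S M] {s : S}
    {c : Prop} [Decidable c] {x : M} (h : c → x ∈ s) : (if c then x else 0) ∈ s :=
  ite_mem.2 ⟨h, fun _ => zero_mem s⟩

theorem lie_mem_span_of_forall_lie_mem_span {R L : Type*} [CommRing R] [LieRing L]
    [LieAlgebra R L] {s : Set L} (hs : ∀ x ∈ s, ∀ y ∈ s, ⁅x, y⁆ ∈ span R s) {x y : L}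
    (hx : x ∈ span R s) (hy : y ∈ span R s) : ⁅x, y⁆ ∈ span R s := by
  induction hx, hy using span_induction₂ with
  | mem_mem x y hx hy => exact hs x hx y hy
  | zero_left y hy => simp
  | zero_right x hx => simp
  | add_left x y z _ _ _ hx hy => simpa only [add_lie] using add_mem hx hy
  | add_right x y z _ _ _ hx hy => simpa only [lie_add] using add_mem hx hy
  | smul_left r x y _ _ h => simpa only [smul_lie] using smul_mem _ r h
  | smul_right r x y _ _ h => simpa only [lie_smul] using smul_mem _ r h

theorem mem_Idx {n : ℕ} {i : ℤ} : i ∈ Idx n ↔ i ≠ 0 ∧ -(n : ℤ) ≤ i ∧ i ≤ n := by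
  simp [Idx]

namespace EE

variable {k : Type*} [Field k] {n : ℕ} {a b c d : ℤ}

theorem mul_EE (hb : b ∈ Idx n) :
    EE k n a b * EE k n c d = if b = c then EE k n a d else 0 := by
  ext p q
  have hr : ∀ r : Iv n, r ≠ ⟨b, hb⟩ → EE k n a b p r * EE k n c d r q = 0 := fun r hr => by
    have : r.1 ≠ b := fun h => hr (Subtype.ext h)
    simp [EE, this]
  rw [Matrix.mul_apply, Finset.sum_eq_single _ (fun r _ => hr r) (by simp)]
  split_ifs with h
  · subst h
    simp only [EE, mul_ite, mul_one, mul_zero, true_and, and_true]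
    split_ifs <;> simp_all
  · simp [EE, h]

theorem mul_EE_neg_eq_zero (hb : 1 ≤ b ∧ b ≤ n) (hc : 1 ≤ c) :
    EE k n a b * EE k n (-c) d = 0 := by
  rw [mul_EE (mem_Idx.mpr (by omega)), if_neg (by omega)]

end EE

namespace gCgen

open EE

variable (k : Type*) [Field k] (n : ℕ)

def blockDiag (i j : ℤ) : Matrix (Iv n) (Iv n) k := EE k n (-i) (-j) - EE k n j i

def upperRight (i j : ℤ) : Matrix (Iv n) (Iv n) k := EE k n (-i) j + EE k n (-j) i

variable {k n} {P : TypeCPoset n} {i j p q : ℤ}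

theorem lie_blockDiag_blockDiag (hi : 1 ≤ i ∧ i ≤ n) (hj : 1 ≤ j ∧ j ≤ n)
    (hp : 1 ≤ p ∧ p ≤ n) (hq : 1 ≤ q ∧ q ≤ n) :
    ⁅blockDiag k n i j, blockDiag k n p q⁆ =
      (if j = p then blockDiag k n i q else 0) - (if q = i then blockDiag k n p j else 0) := by
  have h₁ : -j ∈ Idx n := mem_Idx.mpr (by omega)
  have h₂ : i ∈ Idx n := mem_Idx.mpr (by omega)
  have h₃ : -q ∈ Idx n := mem_Idx.mpr (by omega)
  have h₄ : p ∈ Idx n := mem_Idx.mpr (by omega)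
  simp (disch := omega) only [blockDiag, Ring.lie_def, sub_mul, mul_sub, mul_EE h₁, mul_EE h₂,
    mul_EE h₃, mul_EE h₄, neg_inj, if_neg]
  split_ifs <;> first | omega | (subst_vars; abel)

theorem lie_blockDiag_upperRight (hi : 1 ≤ i ∧ i ≤ n) (hj : 1 ≤ j ∧ j ≤ n)
    (hp : 1 ≤ p ∧ p ≤ n) (hq : 1 ≤ q ∧ q ≤ n) :
    ⁅blockDiag k n i j, upperRight k n p q⁆ =
      (if j = p then upperRight k n i q else 0) + (if j = q then upperRight k n i p else 0) := by
  have h₁ : -j ∈ Idx n := mem_Idx.mpr (by omega)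
  have h₂ : i ∈ Idx n := mem_Idx.mpr (by omega)
  have h₃ : q ∈ Idx n := mem_Idx.mpr (by omega)
  have h₄ : p ∈ Idx n := mem_Idx.mpr (by omega)
  simp (disch := omega) only [blockDiag, upperRight, Ring.lie_def, add_mul, mul_add, sub_mul,
    mul_sub, mul_EE h₁, mul_EE h₂, mul_EE h₃, mul_EE h₄, neg_inj, if_neg]
  split_ifs <;> first | omega | (subst_vars; abel)

theorem lie_blockDiag_EE (hi : 1 ≤ i ∧ i ≤ n) (hj : 1 ≤ j ∧ j ≤ n) (hp : 1 ≤ p ∧ p ≤ n) :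
    ⁅blockDiag k n i j, EE k n (-p) p⁆ = if j = p then upperRight k n i p else 0 := by
  have h₁ : -j ∈ Idx n := mem_Idx.mpr (by omega)
  have h₂ : i ∈ Idx n := mem_Idx.mpr (by omega)
  have h₃ : p ∈ Idx n := mem_Idx.mpr (by omega)
  simp (disch := omega) only [blockDiag, upperRight, Ring.lie_def, sub_mul,
    mul_sub, mul_EE h₁, mul_EE h₂, mul_EE h₃, neg_inj, if_neg]
  split_ifs <;> first | omega | (subst_vars; abel)

theorem blockDiag_mem_span (hi : 1 ≤ i ∧ i ≤ n) (hj : 1 ≤ j ∧ j ≤ n)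
    (h₁ : P.le (-i) (-j)) (h₂ : P.le j i) : blockDiag k n i j ∈ span k (gCgen k n P.le) :=
  subset_span (Or.inr (Or.inl ⟨i, j, hi.1, hi.2, hj.1, hj.2, h₁, h₂, rfl⟩))

theorem EE_neg_self_mem_span (hi : 1 ≤ i ∧ i ≤ n) (h : P.le (-i) i) :
    EE k n (-i) i ∈ span k (gCgen k n P.le) :=
  subset_span (Or.inr (Or.inr (Or.inr ⟨i, hi.1, hi.2, h, rfl⟩)))

theorem upperRight_mem_span (hi : 1 ≤ i ∧ i ≤ n) (hj : 1 ≤ j ∧ j ≤ n)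
    (h₁ : P.le (-i) j) (h₂ : P.le (-j) i) : upperRight k n i j ∈ span k (gCgen k n P.le) := by
  rcases eq_or_ne i j with rfl | hij
  · rw [upperRight, ← two_smul k]
    exact smul_mem _ _ (EE_neg_self_mem_span hi h₁)
  · exact subset_span (Or.inr (Or.inr (Or.inl ⟨i, j, hi.1, hi.2, hj.1, hj.2, h₁, h₂, hij, rfl⟩)))

theorem cases_of_mem {A : Matrix (Iv n) (Iv n) k} (hA : A ∈ gCgen k n P.le) :
    (∃ i j : ℤ, (1 ≤ i ∧ i ≤ n) ∧ (1 ≤ j ∧ j ≤ n) ∧ P.le (-i) (-j) ∧ P.le j i ∧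
        A = blockDiag k n i j) ∨
    (∃ i j : ℤ, (1 ≤ i ∧ i ≤ n) ∧ (1 ≤ j ∧ j ≤ n) ∧ P.le (-i) j ∧ P.le (-j) i ∧
        A = upperRight k n i j) ∨
    (∃ i : ℤ, (1 ≤ i ∧ i ≤ n) ∧ P.le (-i) i ∧ A = EE k n (-i) i) := by
  rcases hA with ⟨i, hi, hi', rfl⟩ | ⟨i, j, hi, hi', hj, hj', h₁, h₂, rfl⟩ |
      ⟨i, j, hi, hi', hj, hj', h₁, h₂, -, rfl⟩ | ⟨i, hi, hi', h, rfl⟩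
  · exact Or.inl ⟨i, i, ⟨hi, hi'⟩, ⟨hi, hi'⟩, P.refl _ (mem_Idx.mpr (by omega)),
      P.refl _ (mem_Idx.mpr (by omega)), rfl⟩
  · exact Or.inl ⟨i, j, ⟨hi, hi'⟩, ⟨hj, hj'⟩, h₁, h₂, rfl⟩
  · exact Or.inr (Or.inl ⟨i, j, ⟨hi, hi'⟩, ⟨hj, hj'⟩, h₁, h₂, rfl⟩)
  · exact Or.inr (Or.inr ⟨i, ⟨hi, hi'⟩, h, rfl⟩)

theorem lie_blockDiag_mem_span {B : Matrix (Iv n) (Iv n) k} (hi : 1 ≤ i ∧ i ≤ n)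
    (hj : 1 ≤ j ∧ j ≤ n) (h₁ : P.le (-i) (-j)) (h₂ : P.le j i) (hB : B ∈ gCgen k n P.le) :
    ⁅blockDiag k n i j, B⁆ ∈ span k (gCgen k n P.le) := by
  rcases cases_of_mem hB with ⟨p, q, hp, hq, h₃, h₄, rfl⟩ | ⟨p, q, hp, hq, h₃, h₄, rfl⟩ |
      ⟨p, hp, h₃, rfl⟩
  · rw [lie_blockDiag_blockDiag hi hj hp hq]
    refine sub_mem (ite_zero_mem fun hjp => ?_) (ite_zero_mem fun hqi => ?_)
    · subst hjp
      exact blockDiag_mem_span hi hq (P.trans _ _ _ h₁ h₃) (P.trans _ _ _ h₄ h₂)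
    · subst hqi
      exact blockDiag_mem_span hp hj (P.trans _ _ _ h₃ h₁) (P.trans _ _ _ h₂ h₄)
  · rw [lie_blockDiag_upperRight hi hj hp hq]
    refine add_mem (ite_zero_mem fun hjp => ?_) (ite_zero_mem fun hjq => ?_)
    · subst hjp
      exact upperRight_mem_span hi hq (P.trans _ _ _ h₁ h₃) (P.trans _ _ _ h₄ h₂)
    · subst hjq
      exact upperRight_mem_span hi hp (P.trans _ _ _ h₁ h₄) (P.trans _ _ _ h₃ h₂)
  · rw [lie_blockDiag_EE hi hj hp]
    refine ite_zero_mem fun hjp => ?_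
    subst hjp
    exact upperRight_mem_span hi hj (P.trans _ _ _ h₁ h₃) (P.trans _ _ _ h₃ h₂)

theorem lie_mem_span {A B : Matrix (Iv n) (Iv n) k} (hA : A ∈ gCgen k n P.le)
    (hB : B ∈ gCgen k n P.le) : ⁅A, B⁆ ∈ span k (gCgen k n P.le) := by
  rcases cases_of_mem hA with ⟨i, j, hi, hj, h₁, h₂, rfl⟩ | hA'
  · exact lie_blockDiag_mem_span hi hj h₁ h₂ hB
  rcases cases_of_mem hB with ⟨p, q, hp, hq, h₃, h₄, rfl⟩ | hB'
  · rw [← neg_mem_iff, lie_skew]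
    exact lie_blockDiag_mem_span hp hq h₃ h₄ hA
  rcases hA' with ⟨i, j, hi, hj, -, -, rfl⟩ | ⟨i, hi, -, rfl⟩ <;>
  rcases hB' with ⟨p, q, hp, hq, -, -, rfl⟩ | ⟨p, hp, -, rfl⟩ <;>
  simp (disch := omega) only [Ring.lie_def, upperRight, add_mul, mul_add, mul_EE_neg_eq_zero,
    add_zero, sub_self, zero_mem]

end gCgen

/-- For a type-C poset `P`, the span of the indicated matrices is a Lie
subalgebra of `gl(2n)`: it is closed under the matrix commutator. -/
theorem stmt4 (k : Type*) [Field k] (n : ℕ) (P : TypeCPoset n)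
    (A B : Matrix (Iv n) (Iv n) k)
    (hA : A ∈ Submodule.span k (gCgen k n P.le))
    (hB : B ∈ Submodule.span k (gCgen k n P.le)) :
    A * B - B * A ∈ Submodule.span k (gCgen k n P.le) :=
  lie_mem_span_of_forall_lie_mem_span (R := k) (fun _ hA _ hB => gCgen.lie_mem_span hA hB) hA hB
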